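/- arXiv:2511.05280 — 3 statements merged into one kernel-verified Lean document; each statement's English description precedes it below -/
import Mathlib

section
/- Let G_t^I(x,x') denote the Dirichlet heat kernel on a bounded interval I ⊂ ℝ. Then for all t ≥ |I|²/8 and all x, x' ∈ I' := {x ∈ I : dist(x, Iᶜ) ≥ |I|/4}, one has G_t^I(x,x') ≥ (c/|I|) e^{−π² t/|I|²}, where c = 1 − 2 ∑_{k≥2} e^{−(π²/8)(k²−1)} ≥ 1/2. -/
open scoped Real

private lemma sin_ge_sqrt2_div_two {θ : ℝ} (h1 : π/4 ≤ θ) (h2 : θ ≤ 3*π/4) :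
    Real.sqrt 2 / 2 ≤ Real.sin θ := by
  have hπ := Real.pi_pos
  have habs : |θ - π/2| ≤ π/4 := by
    rw [abs_le]; constructor <;> linarith
  have hcos := Real.cos_le_cos_of_nonneg_of_le_pi (abs_nonneg (θ - π/2))
    (by linarith) habs
  rw [Real.cos_pi_div_four] at hcos
  rwa [Real.cos_abs, show θ - π/2 = -(π/2 - θ) by ring, Real.cos_neg,
    Real.cos_pi_div_two_sub] at hcos

theorem dirichlet_heat_kernel_lower_bound
    (a L t x x' : ℝ) (hL : 0 < L) (ht : L ^ 2 / 8 ≤ t)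
    (hx : x ∈ Set.Icc (a + L / 4) (a + 3 * L / 4))
    (hx' : x' ∈ Set.Icc (a + L / 4) (a + 3 * L / 4)) :
    ((1 - 2 * ∑' k : ℕ, Real.exp (-(π ^ 2 / 8) * (((k : ℝ) + 2) ^ 2 - 1))) / L) *
        Real.exp (-π ^ 2 * t / L ^ 2)
      ≤ (2 / L) * ∑' k : ℕ,
          Real.exp (-((k : ℝ) + 1) ^ 2 * π ^ 2 * t / L ^ 2) *
            Real.sin (((k : ℝ) + 1) * π * (x - a) / L) *
            Real.sin (((k : ℝ) + 1) * π * (x' - a) / L) := by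
  have hπ := Real.pi_pos
  have htpos : 0 < t := lt_of_lt_of_le (by positivity) ht
  set b : ℝ := π ^ 2 * t / L ^ 2 with hbdef
  have hb : 0 < b := by positivity
  have hb8 : π ^ 2 / 8 ≤ b := by
    rw [hbdef, div_le_div_iff₀ (by norm_num) (by positivity)]
    nlinarith [sq_nonneg π]
  set g : ℕ → ℝ := fun k => Real.exp (-((k : ℝ) + 1) ^ 2 * π ^ 2 * t / L ^ 2) *
      Real.sin (((k : ℝ) + 1) * π * (x - a) / L) *
      Real.sin (((k : ℝ) + 1) * π * (x' - a) / L) with hgdef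
  set M : ℕ → ℝ := fun k => Real.exp (-(π ^ 2 / 8) * (((k : ℝ) + 2) ^ 2 - 1)) with hMdef
  have hexp_eq : ∀ k : ℕ, -((k : ℝ) + 1) ^ 2 * π ^ 2 * t / L ^ 2 = -(((k : ℝ) + 1) ^ 2 * b) := by
    intro k; rw [hbdef]; ring
  have habs_sin : ∀ y : ℝ, |Real.sin y| ≤ 1 := fun y =>
    abs_le.mpr ⟨Real.neg_one_le_sin y, Real.sin_le_one y⟩
  -- summability of g
  have hgeo : Summable (fun k : ℕ => (Real.exp (-b)) ^ k) :=
    summable_geometric_of_lt_one (Real.exp_pos _).le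
      (Real.exp_lt_one_iff.mpr (by linarith))
  have hgabs : ∀ k : ℕ, |g k| ≤ Real.exp (-(((k : ℝ) + 1) ^ 2 * b)) := by
    intro k
    rw [hgdef]
    simp only [abs_mul, hexp_eq k, Real.abs_exp]
    calc Real.exp (-(((k : ℝ) + 1) ^ 2 * b)) * |Real.sin _| * |Real.sin _|
        ≤ Real.exp (-(((k : ℝ) + 1) ^ 2 * b)) * 1 * 1 := by
          apply mul_le_mul (mul_le_mul le_rfl (habs_sin _) (abs_nonneg _)
            (by positivity)) (habs_sin _) (abs_nonneg _) (by positivity)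
      _ = Real.exp (-(((k : ℝ) + 1) ^ 2 * b)) := by ring
  have hgabs' : ∀ k : ℕ, |g k| ≤ (Real.exp (-b)) ^ k := by
    intro k
    refine (hgabs k).trans ?_
    rw [← Real.exp_nat_mul]
    apply Real.exp_le_exp.mpr
    have hk : (0 : ℝ) ≤ (k : ℝ) := Nat.cast_nonneg k
    have hkey : (0 : ℝ) ≤ (((k : ℝ) + 1) ^ 2 - k) * b :=
      mul_nonneg (by nlinarith) hb.le
    nlinarith [hkey]
  have hg : Summable g :=
    Summable.of_abs (Summable.of_nonneg_of_le (fun k => abs_nonneg _) hgabs' hgeo)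
  -- summability of M
  have hM : Summable M := by
    have hgeo2 : Summable (fun k : ℕ => (Real.exp (-(π ^ 2 / 8))) ^ k) :=
      summable_geometric_of_lt_one (Real.exp_pos _).le
        (Real.exp_lt_one_iff.mpr (by nlinarith [sq_nonneg π]))
    refine Summable.of_nonneg_of_le (fun k => (Real.exp_pos _).le) ?_ hgeo2
    intro k
    rw [hMdef, ← Real.exp_nat_mul]
    apply Real.exp_le_exp.mpr
    have hk : (0 : ℝ) ≤ (k : ℝ) := Nat.cast_nonneg k
    have hkey : (0 : ℝ) ≤ ((((k : ℝ) + 2) ^ 2 - 1) - k) * (π ^ 2 / 8) :=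
      mul_nonneg (by nlinarith) (by positivity)
    nlinarith [hkey]
  -- tail bound: |g (k+1)| ≤ exp(-b) * M k
  have htail : ∀ k : ℕ, |g (k + 1)| ≤ Real.exp (-b) * M k := by
    intro k
    refine (hgabs (k + 1)).trans ?_
    rw [hMdef, ← Real.exp_add]
    apply Real.exp_le_exp.mpr
    push_cast
    have hk : (0 : ℝ) ≤ (k : ℝ) := Nat.cast_nonneg k
    have hkey : (((k : ℝ) + 2) ^ 2 - 1) * (π ^ 2 / 8) ≤ (((k : ℝ) + 2) ^ 2 - 1) * b :=
      mul_le_mul_of_nonneg_left hb8 (by nlinarith)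
    nlinarith [hkey]
  -- sum of tail
  have htail_sum : -(Real.exp (-b) * ∑' k, M k) ≤ ∑' k : ℕ, g (k + 1) := by
    have hsub : Summable (fun k : ℕ => g (k + 1)) := (summable_nat_add_iff 1).mpr hg
    have h1 : |∑' k : ℕ, g (k + 1)| ≤ ∑' k : ℕ, Real.exp (-b) * M k := by
      have hn : |∑' k : ℕ, g (k + 1)| ≤ ∑' k : ℕ, |g (k + 1)| := by
        simpa using norm_tsum_le_tsum_norm (f := fun k : ℕ => g (k + 1)) (by simpa using hsub.abs)
      exact hn.trans (Summable.tsum_le_tsum htail hsub.abs (hM.mul_left _))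
    rw [tsum_mul_left] at h1
    linarith [neg_abs_le (∑' k : ℕ, g (k + 1))]
  -- first term bound
  have hsin : ∀ y : ℝ, a + L / 4 ≤ y → y ≤ a + 3 * L / 4 →
      Real.sqrt 2 / 2 ≤ Real.sin (π * (y - a) / L) := by
    intro y hy1 hy2
    apply sin_ge_sqrt2_div_two
    · rw [le_div_iff₀ hL]; nlinarith
    · rw [div_le_iff₀ hL]; nlinarith
  have h0 : Real.exp (-b) * (1 / 2) ≤ g 0 := by
    have e1 := hsin x hx.1 hx.2
    have e2 := hsin x' hx'.1 hx'.2
    have hs2 : (0:ℝ) < Real.sqrt 2 / 2 := by positivity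
    have hprod : (1 : ℝ) / 2 ≤ Real.sin (π * (x - a) / L) * Real.sin (π * (x' - a) / L) := by
      have := mul_le_mul e1 e2 hs2.le (by linarith)
      have hs : Real.sqrt 2 / 2 * (Real.sqrt 2 / 2) = 1 / 2 := by
        rw [div_mul_div_comm, Real.mul_self_sqrt (by norm_num)]; norm_num
      linarith [this, hs.symm ▸ this]
    have : g 0 = Real.exp (-b) * (Real.sin (π * (x - a) / L) * Real.sin (π * (x' - a) / L)) := by
      have harg : -((0:ℝ) + 1) ^ 2 * π ^ 2 * t / L ^ 2 = -b := by rw [hbdef]; ring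
      have harg2 : ((0:ℝ) + 1) * π * (x - a) / L = π * (x - a) / L := by ring
      have harg3 : ((0:ℝ) + 1) * π * (x' - a) / L = π * (x' - a) / L := by ring
      rw [hgdef]
      simp only [Nat.cast_zero, harg, harg2, harg3]
      ring
    rw [this]
    exact mul_le_mul_of_nonneg_left hprod (Real.exp_pos _).le
  -- combine
  have hsplit : ∑' k, g k = g 0 + ∑' k : ℕ, g (k + 1) := Summable.tsum_eq_zero_add hg
  have hT : Real.exp (-b) * (1 / 2) - Real.exp (-b) * ∑' k, M k ≤ ∑' k, g k := by
    rw [hsplit]; linarith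
  have hL2 : (0 : ℝ) < 2 / L := by positivity
  have heq : ((1 - 2 * ∑' k, M k) / L) * Real.exp (-π ^ 2 * t / L ^ 2)
      = (2 / L) * (Real.exp (-b) * (1 / 2) - Real.exp (-b) * ∑' k, M k) := by
    rw [hbdef, show -π ^ 2 * t / L ^ 2 = -(π ^ 2 * t / L ^ 2) by ring]
    field_simp
  calc ((1 - 2 * ∑' k, M k) / L) * Real.exp (-π ^ 2 * t / L ^ 2)
      = (2 / L) * (Real.exp (-b) * (1 / 2) - Real.exp (-b) * ∑' k, M k) := heq
    _ ≤ (2 / L) * ∑' k, g k := by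
        exact mul_le_mul_of_nonneg_left hT hL2.le
end

section
/- Let I be a bounded interval and V ∈ L^∞(I, ℝ) be non-constant (as an a.e. equivalence class). Let e₁ be the first L²-normalized Dirichlet (or periodic) Laplace eigenfunction on I, which is positive in the interior of I. Then there exists a Lipschitz function φ on I with |φ| ≤ 1, with ‖φ'‖_∞ ≤ 2π/|I|, with ∫_I φ e₁² = 0, with φ e₁ vanishing at the endpoints, and with ∫_I V φ e₁² > 0. In particular ω₂(V) := max{∫_I V φ e₁² : φ ∈ L, ‖φ‖_L ≤ 1} > 0. -/
open MeasureTheory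
open scoped Real

/-- First normalized Dirichlet eigenfunction of the Laplacian on `[a,b]`. -/
noncomputable def firstEigenfunction (a b x : ℝ) : ℝ :=
  Real.sqrt (2 / (b - a)) * Real.sin (π * (x - a) / (b - a))

/-!
Put `w = e₁²`, continuous and positive on `(a, b)`, and let `c` be the `w`-weighted mean of `V`.
If `V` is not a.e. constant then `(V - c) w` is not a.e. zero on `(a, b)`, so by the
du Bois-Reymond lemma `∫ (V - c) g w ≠ 0` for some smooth compactly supported `g`. Subtracting
from `g` its weighted mean gives a Lipschitz `ψ` with `∫ ψ w = 0` and `∫ V ψ w = ∫ (V - c) g w`;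
a small multiple of `±ψ` is the required test function.
-/

open Set
open scoped ContDiff NNReal

section Eigenfunction

variable {a b : ℝ}

theorem continuous_firstEigenfunction : Continuous (firstEigenfunction a b) := by
  unfold firstEigenfunction
  fun_prop

@[simp]
theorem firstEigenfunction_left : firstEigenfunction a b a = 0 := by
  simp [firstEigenfunction]

@[simp]
theorem firstEigenfunction_right : firstEigenfunction a b b = 0 := by
  rcases eq_or_ne (b - a) 0 with h | h
  · simp [firstEigenfunction, h]
  · simp [firstEigenfunction, mul_div_assoc, div_self h]

theorem firstEigenfunction_pos {x : ℝ} (hx : x ∈ Ioo a b) : 0 < firstEigenfunction a b x := by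
  have hba : 0 < b - a := sub_pos.mpr (hx.1.trans hx.2)
  refine mul_pos (Real.sqrt_pos.mpr (by positivity)) (Real.sin_pos_of_pos_of_lt_pi ?_ ?_)
  · have := sub_pos.mpr hx.1
    positivity
  · rw [div_lt_iff₀ hba]
    nlinarith [Real.pi_pos, hx.2]

end Eigenfunction

theorem LipschitzWith.exists_pos_mul_lipschitzWith_abs_le_one {α : Type*} [PseudoEMetricSpace α]
    {ψ : α → ℝ} {C : ℝ≥0} (hψ : LipschitzWith C ψ) {B : ℝ} (hB : ∀ x, |ψ x| ≤ B) {K : ℝ≥0}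
    (hK : 0 < K) : ∃ t : ℝ, 0 < t ∧ LipschitzWith K (fun x => t * ψ x) ∧ ∀ x, |t * ψ x| ≤ 1 := by
  set t := min (1 / (|B| + 1)) (K / (C + 1))
  have ht : 0 < t := lt_min (by positivity) (div_pos (mod_cast hK) (by positivity))
  refine ⟨t, ht, ((lipschitzWith_smul t).comp hψ).weaken ?_, fun x => ?_⟩
  · rw [← NNReal.coe_le_coe, NNReal.coe_mul, coe_nnnorm, Real.norm_of_nonneg ht.le]
    calc t * C ≤ K / (C + 1) * C := by gcongr; exact min_le_right _ _
      _ ≤ K := by rw [div_mul_eq_mul_div, div_le_iff₀ (by positivity)]; nlinarith [K.2]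
  · rw [abs_mul, abs_of_pos ht]
    calc t * |ψ x| ≤ 1 / (|B| + 1) * |B| :=
          mul_le_mul (min_le_left _ _) ((hB x).trans (le_abs_self B)) (abs_nonneg _)
            (by positivity)
      _ ≤ 1 := by rw [div_mul_eq_mul_div, div_le_iff₀ (by positivity)]; linarith

section WeightedMean

variable {a b : ℝ} {f g w : ℝ → ℝ}

noncomputable def weightedMean (w : ℝ → ℝ) (a b : ℝ) (f : ℝ → ℝ) : ℝ :=
  (∫ x in a..b, f x * w x) / ∫ x in a..b, w x

theorem integral_sub_weightedMean_mul_eq_zero (hg : Continuous g) (hw : Continuous w)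
    (hW : ∫ x in a..b, w x ≠ 0) :
    ∫ x in a..b, (g x - weightedMean w a b g) * w x = 0 := by
  have hgw : IntervalIntegrable (fun x => g x * w x) volume a b :=
    (hg.mul hw).intervalIntegrable a b
  simp only [sub_mul]
  rw [intervalIntegral.integral_sub hgw (hw.intervalIntegrable a b |>.const_mul _),
    intervalIntegral.integral_const_mul, weightedMean, div_mul_cancel₀ _ hW, sub_self]

theorem integral_sub_weightedMean_mul_mul_eq (hf : IntervalIntegrable f volume a b)
    (hg : Continuous g) (hw : Continuous w) :
    ∫ x in a..b, (f x - weightedMean w a b f) * g x * w x =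
      ∫ x in a..b, f x * (g x - weightedMean w a b g) * w x := by
  have hfgw : IntervalIntegrable (fun x => f x * (g x * w x)) volume a b :=
    hf.mul_continuousOn (hg.mul hw).continuousOn
  have hfw : IntervalIntegrable (fun x => f x * w x) volume a b :=
    hf.mul_continuousOn hw.continuousOn
  have hgw : IntervalIntegrable (fun x => g x * w x) volume a b :=
    (hg.mul hw).intervalIntegrable a b
  have lhs : ∀ x, (f x - weightedMean w a b f) * g x * w x =
      f x * (g x * w x) - weightedMean w a b f * (g x * w x) := fun x => by ring
  have rhs : ∀ x, f x * (g x - weightedMean w a b g) * w x =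
      f x * (g x * w x) - weightedMean w a b g * (f x * w x) := fun x => by ring
  simp only [lhs, rhs]
  rw [intervalIntegral.integral_sub hfgw (hgw.const_mul _),
    intervalIntegral.integral_sub hfgw (hfw.const_mul _),
    intervalIntegral.integral_const_mul, intervalIntegral.integral_const_mul, weightedMean,
    weightedMean]
  ring

theorem exists_contDiff_integral_sub_mul_ne (hab : a < b) (hf : IntervalIntegrable f volume a b)
    (hw : Continuous w) (hw_pos : ∀ x ∈ Ioo a b, 0 < w x) {c : ℝ}
    (hfc : ¬ f =ᵐ[volume.restrict (Icc a b)] fun _ => c) :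
    ∃ g : ℝ → ℝ, ContDiff ℝ ∞ g ∧ HasCompactSupport g ∧
      ∫ x in a..b, (f x - c) * g x * w x ≠ 0 := by
  contrapose! hfc
  have hloc : LocallyIntegrable (fun x => (f x - c) * w x) (volume.restrict (Ioc a b)) :=
    (((hf.sub intervalIntegrable_const).mul_continuousOn hw.continuousOn).1).locallyIntegrable
  have hzero := ae_eq_zero_of_integral_contDiff_smul_eq_zero hloc fun g hg hgc => by
    rw [← hfc g hg hgc, intervalIntegral.integral_of_le hab.le]
    congr with x
    rw [smul_eq_mul]
    ring
  rw [← Measure.restrict_congr_set Ioo_ae_eq_Ioc] at hzero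
  rw [← Measure.restrict_congr_set Ioo_ae_eq_Icc]
  filter_upwards [hzero, ae_restrict_mem measurableSet_Ioo] with x hx hmem
  exact sub_eq_zero.mp ((mul_eq_zero.mp hx).resolve_right (hw_pos x hmem).ne')

theorem exists_lipschitzWith_integral_mul_eq_zero_and_pos (hab : a < b)
    (hf : IntervalIntegrable f volume a b) (hw : Continuous w) (hw_pos : ∀ x ∈ Ioo a b, 0 < w x)
    (hnc : ∀ c : ℝ, ¬ f =ᵐ[volume.restrict (Icc a b)] fun _ => c) :
    ∃ (ψ : ℝ → ℝ) (C : ℝ≥0) (B : ℝ), LipschitzWith C ψ ∧ (∀ x, |ψ x| ≤ B) ∧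
      ∫ x in a..b, ψ x * w x = 0 ∧ 0 < ∫ x in a..b, f x * ψ x * w x := by
  have hW : ∫ x in a..b, w x ≠ 0 :=
    (intervalIntegral.intervalIntegral_pos_of_pos_on (hw.intervalIntegrable a b) hw_pos hab).ne'
  obtain ⟨g, hg, hgc, hJ⟩ :=
    exists_contDiff_integral_sub_mul_ne hab hf hw hw_pos (hnc (weightedMean w a b f))
  rw [integral_sub_weightedMean_mul_mul_eq hf hg.continuous hw] at hJ
  set J := ∫ x in a..b, f x * (g x - weightedMean w a b g) * w x
  set m := weightedMean w a b g
  obtain ⟨C, hC⟩ := hg.lipschitzWith_of_hasCompactSupport hgc (by norm_num)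
  obtain ⟨B, hB⟩ := hg.continuous.bounded_above_of_compact_support hgc
  -- multiplying by `J` itself turns the pairing with `f` into `J ^ 2`
  refine ⟨fun x => J * (g x - m), _, |J| * (B + |m|),
    (lipschitzWith_smul J).comp (hC.sub (LipschitzWith.const m)), fun x => ?_, ?_, ?_⟩
  · rw [abs_mul]
    gcongr
    exact (abs_sub _ _).trans (by gcongr; exact hB x)
  · simp only [mul_assoc, intervalIntegral.integral_const_mul]
    rw [integral_sub_weightedMean_mul_eq_zero hg.continuous hw hW, mul_zero]
  · have hscale : ∀ x, f x * (J * (g x - m)) * w x = J * (f x * (g x - m) * w x) :=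
      fun x => by ring
    simp only [hscale, intervalIntegral.integral_const_mul]
    exact mul_self_pos.mpr hJ

end WeightedMean

theorem exists_test_function_omega2_pos
    (a b : ℝ) (hab : a < b) (V : ℝ → ℝ)
    (hVmeas : Measurable V) (hVbd : ∃ M : ℝ, ∀ x, |V x| ≤ M)
    (hVnc : ∀ c : ℝ, ¬ (V =ᵐ[volume.restrict (Set.Icc a b)] fun _ => c)) :
    ∃ φ : ℝ → ℝ,
      LipschitzOnWith (Real.toNNReal (2 * π / (b - a))) φ (Set.Icc a b) ∧
      (∀ x ∈ Set.Icc a b, |φ x| ≤ 1) ∧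
      (∫ x in a..b, φ x * (firstEigenfunction a b x) ^ 2) = 0 ∧
      φ a * firstEigenfunction a b a = φ b * firstEigenfunction a b b ∧
      0 < ∫ x in a..b, V x * φ x * (firstEigenfunction a b x) ^ 2 := by
  obtain ⟨M, hM⟩ := hVbd
  have hV : IntervalIntegrable V volume a b :=
    (intervalIntegrable_iff_integrableOn_Ioc_of_le hab.le).2 <|
      Measure.integrableOn_of_bounded measure_Ioc_lt_top.ne hVmeas.aestronglyMeasurable
        (ae_of_all _ hM)
  obtain ⟨ψ, C, B, hψ, hB, hψw, hVψw⟩ :=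
    exists_lipschitzWith_integral_mul_eq_zero_and_pos (w := fun x => firstEigenfunction a b x ^ 2)
      hab hV (continuous_firstEigenfunction.pow 2)
      (fun x hx => pow_pos (firstEigenfunction_pos hx) 2) hVnc
  have hK : 0 < Real.toNNReal (2 * π / (b - a)) :=
    Real.toNNReal_pos.mpr (div_pos (by positivity) (sub_pos.mpr hab))
  obtain ⟨t, ht, hφ, hφ_le⟩ := hψ.exists_pos_mul_lipschitzWith_abs_le_one hB hK
  refine ⟨fun x => t * ψ x, hφ.lipschitzOnWith, fun x _ => hφ_le x, ?_, by simp, ?_⟩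
  · simp only [mul_assoc, intervalIntegral.integral_const_mul, hψw, mul_zero]
  · have hscale : ∀ x, V x * (t * ψ x) * firstEigenfunction a b x ^ 2 =
        t * (V x * ψ x * firstEigenfunction a b x ^ 2) := fun x => by ring
    simp only [hscale, intervalIntegral.integral_const_mul]
    exact mul_pos ht hVψw
end

section
/- Let I ⊂ ℝ be a bounded interval, V ∈ L^∞(I,ℝ), s ∈ ℝ with ess inf|V − s| ≥ ω > 0 and V − s of constant sign a.e. on I. If u ∈ H²∩H₀¹(I,ℂ) solves −u'' − λ₁u + i(V − s)u = f with f ∈ L²(I,ℂ), then ‖u‖_{L²} ≤ ‖f‖_{L²}/ω. -/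
/-!
Multiply the equation by `conj u` and integrate over `[a, b]`. Integrating by parts with the
Dirichlet conditions, `∫ u'' ū = -∫ ‖u'‖²` is real, and so is the `λ₁ ∫ ‖u‖²` term; hence taking
imaginary parts leaves `∫ (V - s) ‖u‖² = ∫ Im (f ū)`. Since `V - s` has constant sign and
`|V - s| ≥ ω`, the left side has absolute value at least `ω ∫ ‖u‖²`, while the right side is at
most `∫ ‖f‖ ‖u‖`. The weighted AM-GM inequality `2 ω ‖f‖ ‖u‖ ≤ ‖f‖² + ω² ‖u‖²` then gives
`ω² ∫ ‖u‖² ≤ ∫ ‖f‖²`.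
-/

open MeasureTheory
open scoped Real

open Set ComplexConjugate

theorem mul_norm_sq_eq_im_mul_conj_add_im_mul_conj {f w z : ℂ} {c r : ℝ}
    (h : -w - c * z + Complex.I * r * z = f) :
    r * ‖z‖ ^ 2 = (f * conj z).im + (w * conj z).im := by
  subst h
  simp only [Complex.sq_norm, Complex.normSq_apply, Complex.add_im, Complex.sub_im,
    Complex.neg_im, Complex.mul_im, Complex.mul_re, Complex.I_re, Complex.I_im,
    Complex.ofReal_re, Complex.ofReal_im, Complex.conj_re, Complex.conj_im, Complex.add_re,
    Complex.sub_re, Complex.neg_re]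
  ring

section Dirichlet

variable {a b : ℝ} {u u' u'' : ℝ → ℂ}

theorem integral_second_deriv_mul_conj_eq_neg (hab : a ≤ b)
    (hu' : ∀ x ∈ Icc a b, HasDerivAt u (u' x) x)
    (hu'' : ∀ x ∈ Icc a b, HasDerivAt u' (u'' x) x) (hu''c : ContinuousOn u'' (Icc a b))
    (hua : u a = 0) (hub : u b = 0) :
    ∫ x in a..b, u'' x * conj (u x) = -((∫ x in a..b, ‖u' x‖ ^ 2 : ℝ) : ℂ) := by
  rw [← uIcc_of_le hab] at hu' hu'' hu''c
  have hu'c : ContinuousOn u' (uIcc a b) := fun x hx =>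
    (hu'' x hx).continuousAt.continuousWithinAt
  have ibp := intervalIntegral.integral_mul_deriv_eq_deriv_mul (u := fun x => conj (u x))
    (fun x hx => (hu' x hx).star) hu'' hu'c.star.intervalIntegrable hu''c.intervalIntegrable
  simp only [hua, hub, map_zero, zero_mul, sub_zero, zero_sub] at ibp
  simp only [mul_comm (u'' _), ibp, Complex.star_def, Complex.conj_mul',
    ← intervalIntegral.integral_ofReal, Complex.ofReal_pow]

theorem integral_im_second_deriv_mul_conj_eq_zero (hab : a ≤ b)
    (hu' : ∀ x ∈ Icc a b, HasDerivAt u (u' x) x)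
    (hu'' : ∀ x ∈ Icc a b, HasDerivAt u' (u'' x) x) (hu''c : ContinuousOn u'' (Icc a b))
    (hua : u a = 0) (hub : u b = 0) :
    ∫ x in a..b, (u'' x * conj (u x)).im = 0 := by
  have hu : ContinuousOn u (Icc a b) := fun x hx => (hu' x hx).continuousAt.continuousWithinAt
  have hint : IntervalIntegrable (fun x => u'' x * conj (u x)) volume a b :=
    (hu''c.mul hu.star).intervalIntegrable_of_Icc hab
  have h := Complex.imCLM.intervalIntegral_comp_comm hint
  simp only [Complex.imCLM_apply] at h
  rw [h, integral_second_deriv_mul_conj_eq_neg hab hu' hu'' hu''c hua hub]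
  simp

theorem integral_mul_norm_sq_eq_integral_im_mul_conj {c : ℝ} {q : ℝ → ℝ} {f : ℝ → ℂ}
    (hab : a ≤ b) (hu' : ∀ x ∈ Icc a b, HasDerivAt u (u' x) x)
    (hu'' : ∀ x ∈ Icc a b, HasDerivAt u' (u'' x) x) (hu''c : ContinuousOn u'' (Icc a b))
    (hua : u a = 0) (hub : u b = 0)
    (hf : ContinuousOn f (Icc a b))
    (heq : ∀ x ∈ Icc a b, -u'' x - (c : ℂ) * u x + Complex.I * (q x : ℂ) * u x = f x) :
    IntervalIntegrable (fun x => q x * ‖u x‖ ^ 2) volume a b ∧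
      ∫ x in a..b, q x * ‖u x‖ ^ 2 = ∫ x in a..b, (f x * conj (u x)).im := by
  have hu : ContinuousOn u (Icc a b) := fun x hx => (hu' x hx).continuousAt.continuousWithinAt
  have hfu : IntervalIntegrable (fun x => (f x * conj (u x)).im) volume a b :=
    (Complex.continuous_im.comp_continuousOn (hf.mul hu.star)).intervalIntegrable_of_Icc hab
  have hu''u : IntervalIntegrable (fun x => (u'' x * conj (u x)).im) volume a b :=
    (Complex.continuous_im.comp_continuousOn (hu''c.mul hu.star)).intervalIntegrable_of_Icc hab
  have hpt : EqOn (fun x => q x * ‖u x‖ ^ 2)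
      (fun x => (f x * conj (u x)).im + (u'' x * conj (u x)).im) (uIcc a b) := by
    rw [uIcc_of_le hab]
    exact fun x hx => mul_norm_sq_eq_im_mul_conj_add_im_mul_conj (heq x hx)
  refine ⟨(intervalIntegrable_congr (hpt.mono uIoc_subset_uIcc)).mpr (hfu.add hu''u), ?_⟩
  rw [intervalIntegral.integral_congr hpt, intervalIntegral.integral_add hfu hu''u,
    integral_im_second_deriv_mul_conj_eq_zero hab hu' hu'' hu''c hua hub, add_zero]

end Dirichlet

theorem abs_integral_im_mul_conj_le {a b : ℝ} {f u : ℝ → ℂ} (hab : a ≤ b)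
    (hfu : IntervalIntegrable (fun x => ‖f x‖ * ‖u x‖) volume a b) :
    |∫ x in a..b, (f x * conj (u x)).im| ≤ ∫ x in a..b, ‖f x‖ * ‖u x‖ := by
  rw [← Real.norm_eq_abs]
  refine intervalIntegral.norm_integral_le_of_norm_le hab (ae_of_all _ fun x _ => ?_) hfu
  simpa using Complex.abs_im_le_norm (f x * conj (u x))

section WeightedIntegral

variable {a b ω : ℝ} {q h : ℝ → ℝ}

theorem mul_integral_le_integral_mul_of_le (hab : a ≤ b) (hh : IntervalIntegrable h volume a b)
    (hqh : IntervalIntegrable (fun x => q x * h x) volume a b) (h_nonneg : ∀ x, 0 ≤ h x)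
    (hq : ∀ᵐ x ∂volume.restrict (Icc a b), ω ≤ q x) :
    ω * ∫ x in a..b, h x ≤ ∫ x in a..b, q x * h x := by
  rw [← intervalIntegral.integral_const_mul]
  refine intervalIntegral.integral_mono_ae_restrict hab (hh.const_mul ω) hqh ?_
  filter_upwards [hq] with x hx using mul_le_mul_of_nonneg_right hx (h_nonneg x)

theorem mul_integral_le_abs_integral_mul (hab : a ≤ b) (hh : IntervalIntegrable h volume a b)
    (hqh : IntervalIntegrable (fun x => q x * h x) volume a b) (h_nonneg : ∀ x, 0 ≤ h x)
    (hlow : ∀ᵐ x ∂volume.restrict (Icc a b), ω ≤ |q x|)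
    (hsign : (∀ᵐ x ∂volume.restrict (Icc a b), 0 ≤ q x) ∨
      (∀ᵐ x ∂volume.restrict (Icc a b), q x ≤ 0)) :
    ω * ∫ x in a..b, h x ≤ |∫ x in a..b, q x * h x| := by
  rcases hsign with hpos | hneg
  · refine (mul_integral_le_integral_mul_of_le hab hh hqh h_nonneg ?_).trans (le_abs_self _)
    filter_upwards [hlow, hpos] with x hx hqx using abs_of_nonneg hqx ▸ hx
  · have hle := mul_integral_le_integral_mul_of_le (q := fun x => -q x) hab hh
      (by simp only [neg_mul]; exact hqh.neg) h_nonneg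
      (by filter_upwards [hlow, hneg] with x hx hqx using abs_of_nonpos hqx ▸ hx)
    simp only [neg_mul, intervalIntegral.integral_neg] at hle
    exact hle.trans (neg_le_abs _)

theorem sqrt_integral_sq_le_div_of_mul_integral_sq_le {g : ℝ → ℝ} (hab : a ≤ b) (hω : 0 < ω)
    (hg : IntervalIntegrable (fun x => g x ^ 2) volume a b)
    (hh : IntervalIntegrable (fun x => h x ^ 2) volume a b)
    (hgh : IntervalIntegrable (fun x => g x * h x) volume a b)
    (hle : ω * ∫ x in a..b, h x ^ 2 ≤ ∫ x in a..b, g x * h x) :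
    √(∫ x in a..b, h x ^ 2) ≤ √(∫ x in a..b, g x ^ 2) / ω := by
  have amgm : 2 * ω * ∫ x in a..b, g x * h x ≤
      (∫ x in a..b, g x ^ 2) + ω ^ 2 * ∫ x in a..b, h x ^ 2 := by
    rw [← intervalIntegral.integral_const_mul, ← intervalIntegral.integral_const_mul,
      ← intervalIntegral.integral_add hg (hh.const_mul _)]
    refine intervalIntegral.integral_mono_on hab (hgh.const_mul _) (hg.add (hh.const_mul _))
      fun x _ => ?_
    nlinarith [two_mul_le_add_sq (g x) (ω * h x)]
  have hsq : ω ^ 2 * ∫ x in a..b, h x ^ 2 ≤ ∫ x in a..b, g x ^ 2 := by nlinarith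
  rw [le_div_iff₀ hω, ← Real.sqrt_sq hω.le, ← Real.sqrt_mul' _ (sq_nonneg ω), mul_comm]
  exact Real.sqrt_le_sqrt hsq

end WeightedIntegral

theorem resolvent_constant_sign_bound_general
    (a b : ℝ) (hab : a < b) (V : ℝ → ℝ) (s ω : ℝ) (hω : 0 < ω)
    (hlow : ∀ᵐ x ∂(volume.restrict (Set.Icc a b)), ω ≤ |V x - s|)
    (hsign : (∀ᵐ x ∂(volume.restrict (Set.Icc a b)), 0 ≤ V x - s) ∨
             (∀ᵐ x ∂(volume.restrict (Set.Icc a b)), V x - s ≤ 0))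
    (f u u' u'' : ℝ → ℂ)
    (hf : ContinuousOn f (Set.Icc a b))
    (hu' : ∀ x ∈ Set.Icc a b, HasDerivAt u (u' x) x)
    (hu'' : ∀ x ∈ Set.Icc a b, HasDerivAt u' (u'' x) x)
    (hu''c : ContinuousOn u'' (Set.Icc a b))
    (hua : u a = 0) (hub : u b = 0)
    (heq : ∀ x ∈ Set.Icc a b,
      -u'' x - ((π ^ 2 / (b - a) ^ 2 : ℝ) : ℂ) * u x +
        Complex.I * ((V x - s : ℝ) : ℂ) * u x = f x) :
    Real.sqrt (∫ x in a..b, ‖u x‖ ^ 2) ≤ Real.sqrt (∫ x in a..b, ‖f x‖ ^ 2) / ω := by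
  have hu : ContinuousOn u (Icc a b) := fun x hx => (hu' x hx).continuousAt.continuousWithinAt
  have hu2 : IntervalIntegrable (fun x => ‖u x‖ ^ 2) volume a b :=
    (hu.norm.pow 2).intervalIntegrable_of_Icc hab.le
  have hfu : IntervalIntegrable (fun x => ‖f x‖ * ‖u x‖) volume a b :=
    (hf.norm.mul hu.norm).intervalIntegrable_of_Icc hab.le
  obtain ⟨hVu, hVu_eq⟩ := integral_mul_norm_sq_eq_integral_im_mul_conj (q := fun x => V x - s)
    hab.le hu' hu'' hu''c hua hub hf heq
  refine sqrt_integral_sq_le_div_of_mul_integral_sq_le (g := fun x => ‖f x‖) hab.le hω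
    ((hf.norm.pow 2).intervalIntegrable_of_Icc hab.le) hu2 hfu ?_
  calc ω * ∫ x in a..b, ‖u x‖ ^ 2
      ≤ |∫ x in a..b, (V x - s) * ‖u x‖ ^ 2| :=
        mul_integral_le_abs_integral_mul hab.le hu2 hVu (fun x => by positivity) hlow hsign
    _ = |∫ x in a..b, (f x * conj (u x)).im| := by rw [hVu_eq]
    _ ≤ ∫ x in a..b, ‖f x‖ * ‖u x‖ := abs_integral_im_mul_conj_le hab.le hfu

theorem resolvent_constant_sign_bound
    (a b : ℝ) (hab : a < b) (V : ℝ → ℝ) (s ω : ℝ) (hω : 0 < ω)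
    (hVmeas : Measurable V)
    (hlow : ∀ᵐ x ∂(volume.restrict (Set.Icc a b)), ω ≤ |V x - s|)
    (hsign : (∀ᵐ x ∂(volume.restrict (Set.Icc a b)), 0 ≤ V x - s) ∨
             (∀ᵐ x ∂(volume.restrict (Set.Icc a b)), V x - s ≤ 0))
    (f u u' u'' : ℝ → ℂ)
    (hf : ContinuousOn f (Set.Icc a b))
    (hu' : ∀ x ∈ Set.Icc a b, HasDerivAt u (u' x) x)
    (hu'' : ∀ x ∈ Set.Icc a b, HasDerivAt u' (u'' x) x)
    (hu''c : ContinuousOn u'' (Set.Icc a b))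
    (hua : u a = 0) (hub : u b = 0)
    (heq : ∀ x ∈ Set.Icc a b,
      -u'' x - ((π ^ 2 / (b - a) ^ 2 : ℝ) : ℂ) * u x +
        Complex.I * ((V x - s : ℝ) : ℂ) * u x = f x) :
    Real.sqrt (∫ x in a..b, ‖u x‖ ^ 2) ≤ Real.sqrt (∫ x in a..b, ‖f x‖ ^ 2) / ω :=
  resolvent_constant_sign_bound_general a b hab V s ω hω hlow hsign f u u' u'' hf hu' hu'' hu''c hua
    hub heq
end
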